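/- arXiv:2510.12180 — 2 statements merged into one kernel-verified Lean document; each statement's English description precedes it below -/
import Mathlib

section
/- Let V_ι be the Moreau envelope of V on [0,T]×ℝᵈ and suppose that for every (t,x) ∈ [0,T]×B_{R-1}, any element (s,y) of (the convex hull of) the proximal set satisfies (1/ι)|(t,x)-(s,y)| ≤ 4 C_V R √(2R²+1). Then V_ι is Lipschitz on [0,T]×B_{R-1} with Lipschitz constant 4 C_V R √(2R²+1), using that the superdifferential of V_ι at (t,x) is contained in (1/ι)[(t,x) - conv(Prox_ι[V](t,x))]. -/
set_option maxHeartbeats 1000000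

/-- The Moreau envelope (infimal convolution with a quadratic penalty) of
`V : [0,T] × ℝᵈ → ℝ`. -/
noncomputable def moreauEnv {d : ℕ} (T ι : ℝ) (V : ℝ → EuclideanSpace ℝ (Fin d) → ℝ)
    (t : ℝ) (x : EuclideanSpace ℝ (Fin d)) : ℝ :=
  sInf { r : ℝ | ∃ s ∈ Set.Icc (0:ℝ) T, ∃ y : EuclideanSpace ℝ (Fin d),
    r = V s y + (1 / (2 * ι)) * ((t - s) ^ 2 + ‖x - y‖ ^ 2) }

/-- The set of proximal points of `(t,x)` for the Moreau envelope of `V`. -/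
def proxSet {d : ℕ} (T ι : ℝ) (V : ℝ → EuclideanSpace ℝ (Fin d) → ℝ)
    (t : ℝ) (x : EuclideanSpace ℝ (Fin d)) : Set (ℝ × EuclideanSpace ℝ (Fin d)) :=
  { q | q.1 ∈ Set.Icc (0:ℝ) T ∧
    V q.1 q.2 + (1 / (2 * ι)) * ((t - q.1) ^ 2 + ‖x - q.2‖ ^ 2) = moreauEnv T ι V t x }

private lemma cs2 (a1 a2 b1 b2 : ℝ) :
    a1*b1 + a2*b2 ≤ Real.sqrt (a1^2+a2^2) * Real.sqrt (b1^2+b2^2) := by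
  rcases le_or_gt (a1*b1 + a2*b2) 0 with h | h
  · exact h.trans (by positivity)
  · have h2 : (a1*b1 + a2*b2)^2 ≤ (a1^2+a2^2) * (b1^2+b2^2) := by
      nlinarith [sq_nonneg (a1*b2 - a2*b1)]
    calc a1*b1 + a2*b2 = Real.sqrt ((a1*b1+a2*b2)^2) := by rw [Real.sqrt_sq h.le]
      _ ≤ Real.sqrt ((a1^2+a2^2)*(b1^2+b2^2)) := Real.sqrt_le_sqrt h2
      _ = _ := Real.sqrt_mul (by positivity) _

private lemma sqrt_tri (a1 a2 b1 b2 : ℝ) :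
    Real.sqrt ((a1+b1)^2 + (a2+b2)^2) ≤
      Real.sqrt (a1^2+a2^2) + Real.sqrt (b1^2+b2^2) := by
  have h1 : (a1+b1)^2 + (a2+b2)^2 ≤
      (Real.sqrt (a1^2+a2^2) + Real.sqrt (b1^2+b2^2))^2 := by
    have e1 : Real.sqrt (a1^2+a2^2) ^ 2 = a1^2+a2^2 := Real.sq_sqrt (by positivity)
    have e2 : Real.sqrt (b1^2+b2^2) ^ 2 = b1^2+b2^2 := Real.sq_sqrt (by positivity)
    have h := cs2 a1 a2 b1 b2
    nlinarith
  calc Real.sqrt ((a1+b1)^2 + (a2+b2)^2)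
      ≤ Real.sqrt ((Real.sqrt (a1^2+a2^2) + Real.sqrt (b1^2+b2^2))^2) :=
        Real.sqrt_le_sqrt h1
    _ = _ := Real.sqrt_sq (by positivity)



private lemma quad_lb (c C a b : ℝ) (h : C < c) :
    C*a^2 ≤ c*(a-b)^2 + c*C*b^2/(c-C) := by
  have hcc : (0:ℝ) < c - C := by linarith
  rw [← sub_le_iff_le_add', le_div_iff₀ hcc]
  nlinarith [sq_nonneg ((c-C)*a - c*b)]

private lemma norm_sq_lb {d : ℕ} (x y : EuclideanSpace ℝ (Fin d)) :
    (‖y‖ - ‖x‖)^2 ≤ ‖x - y‖^2 := by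
  have h1 : |‖y‖ - ‖x‖| ≤ ‖y - x‖ := abs_norm_sub_norm_le y x
  have h2 : ‖y - x‖ = ‖x - y‖ := norm_sub_rev y x
  calc (‖y‖-‖x‖)^2 = |‖y‖-‖x‖|^2 := (sq_abs _).symm
    _ ≤ ‖x-y‖^2 := by rw [← h2]; exact pow_le_pow_left₀ (abs_nonneg _) h1 2

private lemma env_bdd {d : ℕ} (T CV ι : ℝ) (hCV : 0 < CV) (hc : CV < 1/(2*ι))
    (V : ℝ → EuclideanSpace ℝ (Fin d) → ℝ)
    (hVgrow : ∀ t ∈ Set.Icc (0:ℝ) T, ∀ x, |V t x| ≤ CV * (1 + ‖x‖ ^ 2))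
    (t : ℝ) (x : EuclideanSpace ℝ (Fin d)) :
    BddBelow { r : ℝ | ∃ s ∈ Set.Icc (0:ℝ) T, ∃ y : EuclideanSpace ℝ (Fin d),
      r = V s y + (1 / (2 * ι)) * ((t - s) ^ 2 + ‖x - y‖ ^ 2) } := by
  set c := 1/(2*ι) with hcdef
  have hc0 : 0 < c := lt_trans hCV hc
  refine ⟨-CV - c*CV*‖x‖^2/(c-CV), ?_⟩
  rintro r ⟨s, hs, y, rfl⟩
  have hV' : -(CV*(1+‖y‖^2)) ≤ V s y := neg_le_of_abs_le (hVgrow s hs y)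
  have hq := quad_lb c CV ‖y‖ ‖x‖ hc
  have h3 : 0 ≤ c * (t-s)^2 := by positivity
  have h4 : c*(‖y‖-‖x‖)^2 ≤ c*‖x-y‖^2 :=
    mul_le_mul_of_nonneg_left (norm_sq_lb x y) hc0.le
  have hex : c * ((t-s)^2 + ‖x-y‖^2) = c*(t-s)^2 + c*‖x-y‖^2 := by ring
  rw [hex]
  nlinarith [hq, h3, h4, hV']

private lemma env_le {d : ℕ} (T CV ι : ℝ) (hCV : 0 < CV) (hc : CV < 1/(2*ι))
    (V : ℝ → EuclideanSpace ℝ (Fin d) → ℝ)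
    (hVgrow : ∀ t ∈ Set.Icc (0:ℝ) T, ∀ x, |V t x| ≤ CV * (1 + ‖x‖ ^ 2))
    (t : ℝ) (x : EuclideanSpace ℝ (Fin d))
    (σ : ℝ) (hσ : σ ∈ Set.Icc (0:ℝ) T) (η : EuclideanSpace ℝ (Fin d)) :
    moreauEnv T ι V t x ≤ V σ η + (1/(2*ι)) * ((t-σ)^2 + ‖x-η‖^2) := by
  exact csInf_le (env_bdd T CV ι hCV hc V hVgrow t x) ⟨σ, hσ, η, rfl⟩

private lemma prox_exists {d : ℕ} (T CV ι : ℝ) (hCV : 0 < CV) (hι : 0 < ι)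
    (hc : CV < 1/(2*ι))
    (V : ℝ → EuclideanSpace ℝ (Fin d) → ℝ)
    (hVcont : Continuous fun p : ℝ × EuclideanSpace ℝ (Fin d) => V p.1 p.2)
    (hVgrow : ∀ t ∈ Set.Icc (0:ℝ) T, ∀ x, |V t x| ≤ CV * (1 + ‖x‖ ^ 2))
    (t : ℝ) (ht : t ∈ Set.Icc (0:ℝ) T) (x : EuclideanSpace ℝ (Fin d)) :
    (proxSet T ι V t x).Nonempty := by
  classical
  set c := 1/(2*ι) with hcdef
  have hc0 : 0 < c := lt_trans hCV hc
  set f : ℝ × EuclideanSpace ℝ (Fin d) → ℝ :=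
    fun q => V q.1 q.2 + c * ((t - q.1) ^ 2 + ‖x - q.2‖ ^ 2) with hfdef
  have hf : Continuous f := by
    apply hVcont.add
    apply continuous_const.mul
    exact ((continuous_const.sub continuous_fst).pow 2).add
      (((continuous_const.sub continuous_snd).norm).pow 2)
  set C' := (CV + c)/2 with hC'def
  have hC'1 : CV < C' := by rw [hC'def]; linarith
  have hC'2 : C' < c := by rw [hC'def]; linarith
  have hκ : 0 < C' - CV := by linarith
  have hlow : ∀ σ ∈ Set.Icc (0:ℝ) T, ∀ η,
      -CV - c*C'*‖x‖^2/(c-C') + (C'-CV)*‖η‖^2 ≤ f (σ, η) := by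
    intro σ hσ η
    have hV' : -(CV*(1+‖η‖^2)) ≤ V σ η := neg_le_of_abs_le (hVgrow σ hσ η)
    have hq := quad_lb c C' ‖η‖ ‖x‖ hC'2
    have h3 : 0 ≤ c*(t-σ)^2 := by positivity
    have h4 : c*(‖η‖-‖x‖)^2 ≤ c*‖x-η‖^2 :=
      mul_le_mul_of_nonneg_left (norm_sq_lb x η) hc0.le
    show -CV - c*C'*‖x‖^2/(c-C') + (C'-CV)*‖η‖^2 ≤
      V σ η + c * ((t - σ) ^ 2 + ‖x - η‖ ^ 2)
    have hex : c * ((t-σ)^2 + ‖x-η‖^2) = c*(t-σ)^2 + c*‖x-η‖^2 := by ring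
    rw [hex]
    nlinarith [hq, h3, h4, hV']
  have hbase : f (t, x) ≤ CV*(1+‖x‖^2) := by
    have h := (abs_le.mp (hVgrow t ht x)).2
    show V t x + c * ((t - t) ^ 2 + ‖x - x‖ ^ 2) ≤ CV*(1+‖x‖^2)
    simp only [sub_self, norm_zero]
    norm_num
    linarith
  set D := CV + c*C'*‖x‖^2/(c-C') with hDdef
  set B := CV*(1+‖x‖^2) with hBdef
  set M : ℝ := max ‖x‖ (Real.sqrt ((B + D)/(C'-CV)) + 1) with hMdef
  set S := Set.Icc (0:ℝ) T ×ˢ Metric.closedBall (0:EuclideanSpace ℝ (Fin d)) M with hSdef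
  have hSc : IsCompact S := isCompact_Icc.prod (isCompact_closedBall 0 M)
  have htxS : (t, x) ∈ S :=
    ⟨ht, mem_closedBall_zero_iff.mpr (le_max_left _ _)⟩
  obtain ⟨q₀, hq₀S, hmin⟩ := hSc.exists_isMinOn ⟨(t,x), htxS⟩ hf.continuousOn
  have hglob : ∀ σ ∈ Set.Icc (0:ℝ) T, ∀ η, f q₀ ≤ f (σ, η) := by
    intro σ hσ η
    rcases le_or_gt ‖η‖ M with hM | hM
    · exact hmin ⟨hσ, mem_closedBall_zero_iff.mpr hM⟩
    · have h1 : f q₀ ≤ B := le_trans (hmin htxS) hbase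
      have h2 := hlow σ hσ η
      have h3 : Real.sqrt ((B+D)/(C'-CV)) + 1 ≤ ‖η‖ :=
        le_trans (le_max_right _ _) hM.le
      have hs0 : 0 ≤ Real.sqrt ((B+D)/(C'-CV)) := Real.sqrt_nonneg _
      have h4 : (B+D)/(C'-CV) ≤ ‖η‖^2 := by
        have h5 : (B+D)/(C'-CV) ≤ (Real.sqrt ((B+D)/(C'-CV)))^2 := by
          rcases le_or_gt 0 ((B+D)/(C'-CV)) with h|h
          · rw [Real.sq_sqrt h]
          · nlinarith
        nlinarith
      have h5 : B + D ≤ (C'-CV)*‖η‖^2 := by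
        rw [div_le_iff₀ hκ] at h4; linarith
      have hD2 : -CV - c*C'*‖x‖^2/(c-C') = -D := by rw [hDdef]; ring
      rw [hD2] at h2
      linarith
  have hval : moreauEnv T ι V t x = f q₀ := by
    apply le_antisymm
    · exact csInf_le (env_bdd T CV ι hCV hc V hVgrow t x)
        ⟨q₀.1, hq₀S.1, q₀.2, rfl⟩
    · rw [moreauEnv]
      have hne : { r : ℝ | ∃ s ∈ Set.Icc (0:ℝ) T, ∃ y : EuclideanSpace ℝ (Fin d),
          r = V s y + (1 / (2 * ι)) * ((t - s) ^ 2 + ‖x - y‖ ^ 2) }.Nonempty :=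
        ⟨f (t,x), ⟨t, ht, x, rfl⟩⟩
      apply le_csInf hne
      rintro r ⟨σ, hσ, η, rfl⟩
      exact hglob σ hσ η
  exact ⟨q₀, hq₀S.1, hval.symm⟩

/-- Local Lipschitz bound for the Moreau envelope: if every point of the convex hull of the
proximal set of each `(t,x) ∈ [0,T] × B_{R-1}` is within distance `ι · 4C_V R √(2R²+1)` of
`(t,x)`, then `V_ι` is Lipschitz on `[0,T] × B_{R-1}` with constant `4C_V R √(2R²+1)`. -/
theorem moreau_envelope_lipschitz {d : ℕ} (T CV R ι : ℝ)
    (hT : 0 < T) (hCV : 0 < CV) (hR : 1 < R) (hι : 0 < ι) (hι' : ι < 1 / (2 * CV))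
    (V : ℝ → EuclideanSpace ℝ (Fin d) → ℝ)
    (hVcont : Continuous fun p : ℝ × EuclideanSpace ℝ (Fin d) => V p.1 p.2)
    (hVgrow : ∀ t ∈ Set.Icc (0:ℝ) T, ∀ x, |V t x| ≤ CV * (1 + ‖x‖ ^ 2))
    (hprox : ∀ t ∈ Set.Icc (0:ℝ) T, ∀ x : EuclideanSpace ℝ (Fin d), ‖x‖ ≤ R - 1 →
      ∀ q ∈ convexHull ℝ (proxSet T ι V t x),
        Real.sqrt ((t - q.1) ^ 2 + ‖x - q.2‖ ^ 2) ≤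
          ι * (4 * CV * R * Real.sqrt (2 * R ^ 2 + 1))) :
    ∀ t ∈ Set.Icc (0:ℝ) T, ∀ s ∈ Set.Icc (0:ℝ) T,
      ∀ x y : EuclideanSpace ℝ (Fin d), ‖x‖ ≤ R - 1 → ‖y‖ ≤ R - 1 →
      |moreauEnv T ι V t x - moreauEnv T ι V s y| ≤
        4 * CV * R * Real.sqrt (2 * R ^ 2 + 1) *
          Real.sqrt ((t - s) ^ 2 + ‖x - y‖ ^ 2) := by
  have hc : CV < 1/(2*ι) := by
    rw [lt_div_iff₀ (by positivity)] at hι' ⊢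
    nlinarith
  set L : ℝ := 4 * CV * R * Real.sqrt (2 * R ^ 2 + 1) with hLdef
  have hL0 : 0 < L := by
    have : 0 < Real.sqrt (2 * R ^ 2 + 1) := Real.sqrt_pos.mpr (by positivity)
    positivity
  have hc0 : (0:ℝ) < 1/(2*ι) := by positivity
  -- one-step estimate
  have onestep : ∀ a ∈ Set.Icc (0:ℝ) T, ∀ u : EuclideanSpace ℝ (Fin d), ‖u‖ ≤ R-1 →
      ∀ b ∈ Set.Icc (0:ℝ) T, ∀ v : EuclideanSpace ℝ (Fin d), ‖v‖ ≤ R-1 →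
      moreauEnv T ι V b v - moreauEnv T ι V a u ≤
        L * Real.sqrt ((a-b)^2 + ‖u-v‖^2) + ((a-b)^2 + ‖u-v‖^2)/(2*ι) := by
    intro a ha u hu b hb v hv
    obtain ⟨q, hqmem⟩ := prox_exists T CV ι hCV hι hc V hVcont hVgrow a ha u
    have hq1 : q.1 ∈ Set.Icc (0:ℝ) T := hqmem.1
    have hqe : V q.1 q.2 + (1/(2*ι))*((a - q.1)^2 + ‖u - q.2‖^2) = moreauEnv T ι V a u :=
      hqmem.2
    have hrL : Real.sqrt ((a-q.1)^2 + ‖u-q.2‖^2) ≤ ι*L :=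
      hprox a ha u hu q (subset_convexHull ℝ _ hqmem)
    set r := Real.sqrt ((a-q.1)^2+‖u-q.2‖^2) with hrdef
    have hr0 : 0 ≤ r := Real.sqrt_nonneg _
    have hr2 : r^2 = (a-q.1)^2+‖u-q.2‖^2 := Real.sq_sqrt (by positivity)
    set δ := Real.sqrt ((a-b)^2+‖u-v‖^2) with hδdef
    have hδ0 : 0 ≤ δ := Real.sqrt_nonneg _
    have hδ2 : δ^2 = (a-b)^2+‖u-v‖^2 := Real.sq_sqrt (by positivity)
    have hle := env_le T CV ι hCV hc V hVgrow b v q.1 hq1 q.2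
    have htri : Real.sqrt ((b-q.1)^2 + ‖v-q.2‖^2) ≤ δ + r := by
      have h1 : ‖v - q.2‖ ≤ ‖v - u‖ + ‖u - q.2‖ := by
        simpa [dist_eq_norm] using dist_triangle v u q.2
      have h2 : (b - q.1) = (b-a) + (a - q.1) := by ring
      calc Real.sqrt ((b-q.1)^2 + ‖v-q.2‖^2)
          ≤ Real.sqrt (((b-a)+(a-q.1))^2 + (‖v-u‖+‖u-q.2‖)^2) := by
            apply Real.sqrt_le_sqrt
            exact add_le_add (le_of_eq (by rw [← h2]))
              (pow_le_pow_left₀ (norm_nonneg _) h1 2)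
        _ ≤ Real.sqrt ((b-a)^2 + ‖v-u‖^2) + Real.sqrt ((a-q.1)^2+‖u-q.2‖^2) :=
            sqrt_tri (b-a) ‖v-u‖ (a-q.1) ‖u-q.2‖
        _ = δ + r := by
            rw [hδdef, hrdef, show (b-a)^2 = (a-b)^2 from by ring, norm_sub_rev v u]
    have hsq : (b-q.1)^2 + ‖v-q.2‖^2 ≤ (δ+r)^2 := by
      have h := pow_le_pow_left₀ (Real.sqrt_nonneg _) htri 2
      rwa [Real.sq_sqrt (by positivity)] at h
    have main : moreauEnv T ι V b v - moreauEnv T ι V a u ≤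
        (1/(2*ι)) * ((δ+r)^2 - r^2) := by
      calc moreauEnv T ι V b v - moreauEnv T ι V a u
          ≤ (V q.1 q.2 + (1/(2*ι))*((b-q.1)^2+‖v-q.2‖^2)) -
            (V q.1 q.2 + (1/(2*ι))*((a-q.1)^2+‖u-q.2‖^2)) := by
            rw [← hqe]; linarith [hle]
        _ = (1/(2*ι))*(((b-q.1)^2+‖v-q.2‖^2) - ((a-q.1)^2+‖u-q.2‖^2)) := by ring
        _ ≤ (1/(2*ι)) * ((δ+r)^2 - r^2) := by
            apply mul_le_mul_of_nonneg_left _ hc0.le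
            have := hr2
            linarith [hsq]
    have h2 : (1/(2*ι))*((δ+r)^2 - r^2) ≤ L*δ + δ^2/(2*ι) := by
      have hδr : δ*r ≤ δ*(ι*L) := mul_le_mul_of_nonneg_left hrL hδ0
      have he : (δ+r)^2 - r^2 = δ^2 + 2*(δ*r) := by ring
      rw [he]
      have e : (1/(2*ι))*(δ^2 + 2*(δ*(ι*L))) = L*δ + δ^2/(2*ι) := by
        field_simp; ring
      calc (1/(2*ι))*(δ^2+2*(δ*r)) ≤ (1/(2*ι))*(δ^2+2*(δ*(ι*L))) := by
            apply mul_le_mul_of_nonneg_left (by linarith) hc0.le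
        _ = L*δ + δ^2/(2*ι) := e
    have h3 := main.trans h2
    rw [hδ2] at h3
    exact h3
  -- chained estimate
  have key : ∀ a ∈ Set.Icc (0:ℝ) T, ∀ u : EuclideanSpace ℝ (Fin d), ‖u‖ ≤ R-1 →
      ∀ b ∈ Set.Icc (0:ℝ) T, ∀ v : EuclideanSpace ℝ (Fin d), ‖v‖ ≤ R-1 →
      moreauEnv T ι V b v - moreauEnv T ι V a u ≤
        L * Real.sqrt ((a-b)^2 + ‖u-v‖^2) := by
    intro a ha u hu b hb v hv
    set d0 := Real.sqrt ((a-b)^2+‖u-v‖^2) with hd0def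
    have hd00 : 0 ≤ d0 := Real.sqrt_nonneg _
    have hd02 : d0^2 = (a-b)^2+‖u-v‖^2 := Real.sq_sqrt (by positivity)
    refine le_of_forall_pos_le_add ?_
    intro ε hε
    obtain ⟨n, hn⟩ := exists_nat_ge (d0^2/(2*ι*ε))
    set N : ℕ := n+1 with hNdef
    have hN0 : (0:ℝ) < (N:ℝ) := by positivity
    have hNn : (n:ℝ) ≤ (N:ℝ) := by exact_mod_cast Nat.le_succ n
    set F : ℕ → ℝ := fun k =>
      moreauEnv T ι V (a + ((k:ℝ)/(N:ℝ))*(b-a)) (u + ((k:ℝ)/(N:ℝ))•(v-u)) with hFdef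
    have hFa : F 0 = moreauEnv T ι V a u := by
      simp [hFdef]
    have hFb : F N = moreauEnv T ι V b v := by
      have h1 : a + ((N:ℝ)/(N:ℝ))*(b-a) = b := by rw [div_self hN0.ne']; ring
      have h2 : u + ((N:ℝ)/(N:ℝ))•(v-u) = v := by
        rw [div_self hN0.ne', one_smul]; abel
      simp only [hFdef, h1, h2]
    have hmem : ∀ k : ℕ, k ≤ N →
        (a + ((k:ℝ)/(N:ℝ))*(b-a) ∈ Set.Icc (0:ℝ) T ∧
          ‖u + ((k:ℝ)/(N:ℝ))•(v-u)‖ ≤ R-1) := by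
      intro k hk
      have hθ0 : 0 ≤ (k:ℝ)/(N:ℝ) := by positivity
      have hθ1 : (k:ℝ)/(N:ℝ) ≤ 1 := by
        rw [div_le_one hN0]; exact_mod_cast hk
      refine ⟨⟨?_, ?_⟩, ?_⟩
      · nlinarith [ha.1, hb.1, mul_nonneg hθ0 hb.1,
          mul_nonneg (sub_nonneg.mpr hθ1) ha.1]
      · nlinarith [mul_nonneg hθ0 (sub_nonneg.mpr hb.2),
          mul_nonneg (sub_nonneg.mpr hθ1) (sub_nonneg.mpr ha.2)]
      · have he : u + ((k:ℝ)/(N:ℝ))•(v-u) =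
            (1 - (k:ℝ)/(N:ℝ))•u + ((k:ℝ)/(N:ℝ))•v := by
          rw [smul_sub, sub_smul, one_smul]; abel
        rw [he]
        calc ‖(1 - (k:ℝ)/(N:ℝ))•u + ((k:ℝ)/(N:ℝ))•v‖
            ≤ ‖(1-(k:ℝ)/(N:ℝ))•u‖ + ‖((k:ℝ)/(N:ℝ))•v‖ := norm_add_le _ _
          _ = (1-(k:ℝ)/(N:ℝ))*‖u‖ + ((k:ℝ)/(N:ℝ))*‖v‖ := by
              rw [norm_smul, norm_smul, Real.norm_eq_abs, Real.norm_eq_abs,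
                abs_of_nonneg (by linarith), abs_of_nonneg hθ0]
          _ ≤ (1-(k:ℝ)/(N:ℝ))*(R-1) + ((k:ℝ)/(N:ℝ))*(R-1) :=
              add_le_add (mul_le_mul_of_nonneg_left hu (by linarith))
                (mul_le_mul_of_nonneg_left hv hθ0)
          _ = R-1 := by ring
    have hstep : ∀ k ∈ Finset.range N,
        F (k+1) - F k ≤ L*(d0/(N:ℝ)) + (d0/(N:ℝ))^2/(2*ι) := by
      intro k hk
      have hkN : k ≤ N := (Finset.mem_range.mp hk).le
      have hkN' : k+1 ≤ N := Finset.mem_range.mp hk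
      obtain ⟨h1, h2⟩ := hmem k hkN
      obtain ⟨h3, h4⟩ := hmem (k+1) hkN'
      have hone := onestep _ h1 _ h2 _ h3 _ h4
      have e0 : (((k+1:ℕ)):ℝ) = (k:ℝ)+1 := by push_cast; ring
      have e1 : (a + ((k:ℝ)/(N:ℝ))*(b-a)) - (a + (((k+1:ℕ)):ℝ)/(N:ℝ)*(b-a)) =
          (1/(N:ℝ))*(a-b) := by
        rw [e0]; field_simp; ring
      have e2 : (u + ((k:ℝ)/(N:ℝ))•(v-u)) - (u + ((((k+1:ℕ)):ℝ)/(N:ℝ))•(v-u)) =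
          (1/(N:ℝ))•(u-v) := by
        rw [show (u + ((k:ℝ)/(N:ℝ))•(v-u)) - (u + ((((k+1:ℕ)):ℝ)/(N:ℝ))•(v-u)) =
          (((k:ℝ)/(N:ℝ)) - ((((k+1:ℕ)):ℝ)/(N:ℝ)))•(v-u) from by
            rw [sub_smul]; abel]
        rw [show ((k:ℝ)/(N:ℝ)) - ((((k+1:ℕ)):ℝ)/(N:ℝ)) = -(1/(N:ℝ)) from by
          rw [e0]; field_simp; ring]
        rw [neg_smul, ← smul_neg, neg_sub]
      have e3 : ((a + ((k:ℝ)/(N:ℝ))*(b-a)) - (a + (((k+1:ℕ)):ℝ)/(N:ℝ)*(b-a)))^2 +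
          ‖(u + ((k:ℝ)/(N:ℝ))•(v-u)) - (u + ((((k+1:ℕ)):ℝ)/(N:ℝ))•(v-u))‖^2 =
          (d0/(N:ℝ))^2 := by
        rw [e1, e2, norm_smul, Real.norm_eq_abs,
          abs_of_nonneg (by positivity : (0:ℝ) ≤ 1/(N:ℝ)), div_pow, hd02]
        ring
      rw [e3] at hone
      rw [Real.sqrt_sq (by positivity)] at hone
      exact hone
    have tele : F N - F 0 = ∑ k ∈ Finset.range N, (F (k+1) - F k) :=
      (Finset.sum_range_sub F N).symm
    have hsum : ∑ k ∈ Finset.range N, (F (k+1) - F k) ≤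
        (N:ℝ) * (L*(d0/(N:ℝ)) + (d0/(N:ℝ))^2/(2*ι)) := by
      calc ∑ k ∈ Finset.range N, (F (k+1) - F k)
          ≤ ∑ _k ∈ Finset.range N, (L*(d0/(N:ℝ)) + (d0/(N:ℝ))^2/(2*ι)) :=
            Finset.sum_le_sum hstep
        _ = (N:ℝ) * (L*(d0/(N:ℝ)) + (d0/(N:ℝ))^2/(2*ι)) := by
            rw [Finset.sum_const, Finset.card_range, nsmul_eq_mul]
    have hNval : (N:ℝ) * (L*(d0/(N:ℝ)) + (d0/(N:ℝ))^2/(2*ι)) =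
        L*d0 + d0^2/(2*ι*(N:ℝ)) := by
      field_simp
    have hεb : d0^2/(2*ι*(N:ℝ)) ≤ ε := by
      have h1 : d0^2/(2*ι*ε) ≤ (N:ℝ) := hn.trans hNn
      rw [div_le_iff₀ (by positivity)] at h1 ⊢
      nlinarith
    calc moreauEnv T ι V b v - moreauEnv T ι V a u = F N - F 0 := by
          rw [hFa, hFb]
      _ = ∑ k ∈ Finset.range N, (F (k+1) - F k) := tele
      _ ≤ (N:ℝ) * (L*(d0/(N:ℝ)) + (d0/(N:ℝ))^2/(2*ι)) := hsum
      _ = L*d0 + d0^2/(2*ι*(N:ℝ)) := hNval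
      _ ≤ L*d0 + ε := by linarith
  intro t ht s hs x y hx hy
  rw [abs_sub_le_iff]
  constructor
  · have h := key s hs y hy t ht x hx
    rwa [show (s-t)^2 = (t-s)^2 from by ring, norm_sub_rev y x] at h
  · exact key t ht x hx s hs y hy
end

section
/- Suppose nonnegative differentiable functions L_a, L_c, L_μ on [0,∞) satisfy the system L_a' ≤ -(c_a β_a - C_a β_μ) L_a - (β_a/2) G + (K²/(2σ₀)) β_a L_c, L_c' ≤ -c_c β_c L_c + (2C_c/λ_T)(β_μ²/β_c) L_μ + C_c (β_a²/β_c) G, and (λ_μ L_μ)' ≤ -λ_μ c_μ β_μ L_μ + λ_μ C_μ (β_a²/β_μ) G, where G ≥ 0. If the parameters satisfy c_a β_a - C_a β_μ ≥ (1/2) c_a β_a, (1/2)c_c β_c ≥ (K²/(2σ₀))β_a, (1/2)λ_μ c_μ β_μ ≥ (2C_c/λ_T)(β_μ²/β_c), and (1/2)β_a ≥ C_c β_a²/β_c + λ_μ C_μ β_a²/β_μ, then L := L_a + L_c + λ_μ L_μ satisfies L'(τ) ≤ -c_L L(τ) with c_L = (1/2)min{c_a β_a, c_c β_c, c_μ β_μ},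 and hence L(τ) ≤ L(0) e^{-c_L τ}. -/
set_option maxHeartbeats 1000000 in
/-- Lyapunov combination argument for the MFAC flow: under the coupled differential
inequalities for the actor, critic and distribution Lyapunov functions and the timescale
conditions on the parameters, the total Lyapunov function
`L = L_a + L_c + λ_μ L_μ` satisfies `L' ≤ -c_L L` with
`c_L = (1/2) min{c_a β_a, c_c β_c, c_μ β_μ}`, hence `L(τ) ≤ L(0) e^{-c_L τ}`. -/
theorem mfac_total_lyapunov_decay
    (ca Ca cc Cc cμ Cμ K σ0 lT lμ βa βc βμ : ℝ)
    (hca : 0 < ca) (hCa : 0 < Ca) (hcc : 0 < cc) (hCc : 0 < Cc)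
    (hcμ : 0 < cμ) (hCμ : 0 < Cμ) (hK : 0 < K) (hσ0 : 0 < σ0)
    (hlT : 0 < lT) (hlμ : 0 < lμ) (hβa : 0 < βa) (hβc : 0 < βc) (hβμ : 0 < βμ)
    (La Lc Lμ G La' Lc' Lμ' : ℝ → ℝ)
    (hnn : ∀ τ : ℝ, 0 ≤ τ → 0 ≤ La τ ∧ 0 ≤ Lc τ ∧ 0 ≤ Lμ τ ∧ 0 ≤ G τ)
    (hdLa : ∀ τ : ℝ, 0 ≤ τ → HasDerivAt La (La' τ) τ)
    (hdLc : ∀ τ : ℝ, 0 ≤ τ → HasDerivAt Lc (Lc' τ) τ)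
    (hdLμ : ∀ τ : ℝ, 0 ≤ τ → HasDerivAt Lμ (Lμ' τ) τ)
    (hLa : ∀ τ : ℝ, 0 ≤ τ →
      La' τ ≤ -(ca * βa - Ca * βμ) * La τ - (βa / 2) * G τ +
        (K ^ 2 / (2 * σ0)) * βa * Lc τ)
    (hLc : ∀ τ : ℝ, 0 ≤ τ →
      Lc' τ ≤ -(cc * βc) * Lc τ + (2 * Cc / lT) * (βμ ^ 2 / βc) * Lμ τ +
        Cc * (βa ^ 2 / βc) * G τ)
    (hLμ : ∀ τ : ℝ, 0 ≤ τ →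
      lμ * Lμ' τ ≤ -(lμ * cμ * βμ) * Lμ τ + lμ * Cμ * (βa ^ 2 / βμ) * G τ)
    (hpar1 : (1 / 2) * ca * βa ≤ ca * βa - Ca * βμ)
    (hpar2 : (K ^ 2 / (2 * σ0)) * βa ≤ (1 / 2) * cc * βc)
    (hpar3 : (2 * Cc / lT) * (βμ ^ 2 / βc) ≤ (1 / 2) * lμ * cμ * βμ)
    (hpar4 : Cc * βa ^ 2 / βc + lμ * Cμ * βa ^ 2 / βμ ≤ (1 / 2) * βa) :
    (∀ τ : ℝ, 0 ≤ τ →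
      La' τ + Lc' τ + lμ * Lμ' τ ≤
        -((1 / 2) * min (min (ca * βa) (cc * βc)) (cμ * βμ)) *
          (La τ + Lc τ + lμ * Lμ τ)) ∧
    (∀ τ : ℝ, 0 ≤ τ →
      La τ + Lc τ + lμ * Lμ τ ≤
        (La 0 + Lc 0 + lμ * Lμ 0) *
          Real.exp (-((1 / 2) * min (min (ca * βa) (cc * βc)) (cμ * βμ)) * τ)) := by
  set cL : ℝ := (1 / 2) * min (min (ca * βa) (cc * βc)) (cμ * βμ) with hcL
  have hm1 : cL ≤ (1/2) * (ca * βa) := by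
    have := min_le_left (min (ca * βa) (cc * βc)) (cμ * βμ)
    have := min_le_left (ca * βa) (cc * βc)
    rw [hcL]; nlinarith [min_le_left (min (ca * βa) (cc * βc)) (cμ * βμ),
      min_le_left (ca * βa) (cc * βc)]
  have hm2 : cL ≤ (1/2) * (cc * βc) := by
    rw [hcL]; nlinarith [min_le_left (min (ca * βa) (cc * βc)) (cμ * βμ),
      min_le_right (ca * βa) (cc * βc)]
  have hm3 : cL ≤ (1/2) * (cμ * βμ) := by
    rw [hcL]; nlinarith [min_le_right (min (ca * βa) (cc * βc)) (cμ * βμ)]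
  have key : ∀ τ : ℝ, 0 ≤ τ →
      La' τ + Lc' τ + lμ * Lμ' τ ≤ -cL * (La τ + Lc τ + lμ * Lμ τ) := by
    intro τ hτ
    obtain ⟨ha, hc, hμn, hg⟩ := hnn τ hτ
    have h1 : cL * La τ ≤ (ca * βa - Ca * βμ) * La τ :=
      mul_le_mul_of_nonneg_right (by linarith) ha
    have h2 : ((K ^ 2 / (2 * σ0)) * βa + cL) * Lc τ ≤ (cc * βc) * Lc τ :=
      mul_le_mul_of_nonneg_right (by linarith) hc
    have h3 : ((2 * Cc / lT) * (βμ ^ 2 / βc) + cL * lμ) * Lμ τ ≤ (lμ * cμ * βμ) * Lμ τ := by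
      apply mul_le_mul_of_nonneg_right _ hμn
      have : cL * lμ ≤ (1/2) * (cμ * βμ) * lμ :=
        mul_le_mul_of_nonneg_right hm3 (le_of_lt hlμ)
      nlinarith
    have h4 : (Cc * βa ^ 2 / βc + lμ * Cμ * βa ^ 2 / βμ) * G τ ≤ (βa / 2) * G τ :=
      mul_le_mul_of_nonneg_right (by linarith) hg
    have e1 := hLa τ hτ
    have e2 := hLc τ hτ
    have e3 := hLμ τ hτ
    have hdiv1 : Cc * (βa ^ 2 / βc) * G τ = (Cc * βa ^ 2 / βc) * G τ := by ring
    have hdiv2 : lμ * Cμ * (βa ^ 2 / βμ) * G τ = (lμ * Cμ * βa ^ 2 / βμ) * G τ := by ring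
    linarith [e1, e2, e3, h1, h2, h3, h4]
  refine ⟨key, ?_⟩
  intro τ hτ
  set Lt : ℝ → ℝ := fun t => La t + Lc t + lμ * Lμ t with hLt
  set g : ℝ → ℝ := fun t => Lt t * Real.exp (cL * t) with hg
  have hdg : ∀ t : ℝ, 0 ≤ t →
      HasDerivAt g ((La' t + Lc' t + lμ * Lμ' t + cL * Lt t) * Real.exp (cL * t)) t := by
    intro t ht
    have hL : HasDerivAt Lt (La' t + Lc' t + lμ * Lμ' t) t := by
      have := ((hdLa t ht).add (hdLc t ht)).add ((hdLμ t ht).const_mul lμ)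
      exact this
    have hE : HasDerivAt (fun s => Real.exp (cL * s)) (Real.exp (cL * t) * cL) t := by
      simpa using ((hasDerivAt_id t).const_mul cL).exp
    have h := hL.mul hE
    exact h.congr_deriv (by ring)
  have hanti : AntitoneOn g (Set.Ici (0:ℝ)) := by
    apply antitoneOn_of_deriv_nonpos (convex_Ici 0)
    · exact fun t ht => ((hdg t ht).continuousAt).continuousWithinAt
    · intro t ht
      rw [interior_Ici] at ht
      exact ((hdg t (le_of_lt ht)).differentiableAt).differentiableWithinAt
    · intro t ht
      rw [interior_Ici] at ht
      have ht' : (0:ℝ) ≤ t := le_of_lt ht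
      rw [(hdg t ht').deriv]
      have hk := key t ht'
      have hlt : Lt t = La t + Lc t + lμ * Lμ t := rfl
      have hsum : La' t + Lc' t + lμ * Lμ' t + cL * Lt t ≤ 0 := by
        rw [hlt]; linarith
      exact mul_nonpos_iff.mpr (Or.inr ⟨hsum, (Real.exp_pos _).le⟩)
  have := hanti (Set.self_mem_Ici) (Set.mem_Ici.mpr hτ) hτ
  have hE : (0:ℝ) < Real.exp (cL * τ) := Real.exp_pos _
  have hg0 : g 0 = Lt 0 := by simp [hg]
  have : Lt τ * Real.exp (cL * τ) ≤ Lt 0 := by simpa [hg0] using this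
  have hfinal : Lt τ ≤ Lt 0 * Real.exp (-cL * τ) := by
    have hmul := mul_le_mul_of_nonneg_right this (Real.exp_pos (-cL * τ)).le
    have hid : Lt τ * Real.exp (cL * τ) * Real.exp (-cL * τ) = Lt τ := by
      rw [mul_assoc, ← Real.exp_add]; simp
    linarith [hmul, hid.symm.le, hid.le]
  simpa [hLt] using hfinal
end
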